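/- Let L be a regular language over a finite alphabet Σ with quotient complexity κ(L) = n. If for some letter a ∈ Σ the quotient L_a is uniquely reachable, i.e., L_x = L_a implies x = a, then σ(L) ≤ 1 + (n-2)^n. -/
import Mathlib

/-- The left quotient of a language `L` by a word `w`: `{x | w ++ x ∈ L}`. -/
def leftQ {α : Type*} (L : Set (List α)) (w : List α) : Set (List α) :=
  {x | w ++ x ∈ L}

/-- Quotient (state) complexity: the number of distinct left quotients of `L`. -/
noncomputable def quotCompl {α : Type*} (L : Set (List α)) : ℕ :=
  Nat.card (Set.range (leftQ L))

/-- The syntactic (Myhill) congruence of `L`. -/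
def synRel {α : Type*} (L : Set (List α)) (x y : List α) : Prop :=
  ∀ u v : List α, u ++ x ++ v ∈ L ↔ u ++ y ++ v ∈ L

/-- The syntactic setoid on the free semigroup of non-empty words. -/
def synSetoid {α : Type*} (L : Set (List α)) : Setoid {w : List α // w ≠ []} :=
  ⟨fun x y => synRel L x.1 y.1,
   ⟨fun _ _ _ => Iff.rfl, fun h u v => (h u v).symm,
    fun h₁ h₂ u v => (h₁ u v).trans (h₂ u v)⟩⟩

/-- Syntactic complexity: the cardinality of the syntactic semigroup of `L`. -/
noncomputable def synCompl {α : Type*} (L : Set (List α)) : ℕ :=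
  Nat.card (Quotient (synSetoid L))

namespace Stmt6Aux

variable {α : Type*} (L : Set (List α))

lemma leftQ_append (w x : List α) : leftQ L (w ++ x) = leftQ (leftQ L w) x := by
  ext v; simp [leftQ, List.append_assoc]

/-- The transformation of the quotient set induced by a word. -/
def step (x : List α) (q : Set.range (leftQ L)) : Set.range (leftQ L) :=
  ⟨leftQ q.1 x, by
    obtain ⟨w, hw⟩ := q.2
    exact ⟨w ++ x, by rw [leftQ_append, hw]⟩⟩

lemma step_eq_of_synRel {x y : List α} (h : synRel L x y) : step L x = step L y := by
  funext q
  obtain ⟨w, hw⟩ := q.2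
  apply Subtype.ext
  show leftQ q.1 x = leftQ q.1 y
  rw [← hw]
  ext v
  simp only [leftQ, Set.mem_setOf_eq, ← List.append_assoc]
  exact h w v

/-- The induced map from the syntactic semigroup into transformations. -/
def G : Quotient (synSetoid L) → (Set.range (leftQ L) → Set.range (leftQ L)) :=
  Quotient.lift (fun x : {w : List α // w ≠ []} => step L x.1)
    (fun _ _ h => step_eq_of_synRel L h)

lemma G_inj : Function.Injective (G L) := by
  rintro ⟨x⟩ ⟨y⟩ h
  apply Quotient.sound
  show synRel L x.1 y.1
  intro u v
  have h2 : (step L x.1 ⟨leftQ L u, ⟨u, rfl⟩⟩).1 = (step L y.1 ⟨leftQ L u, ⟨u, rfl⟩⟩).1 :=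
    congrArg Subtype.val (congrFun h ⟨leftQ L u, ⟨u, rfl⟩⟩)
  have h3 := Set.ext_iff.mp h2 v
  simpa only [step, leftQ, Set.mem_setOf_eq, List.append_assoc] using h3

/-- The initial state. -/
def eSt : Set.range (leftQ L) := ⟨leftQ L [], ⟨[], rfl⟩⟩

/-- The state `L_a`. -/
def aSt (a : α) : Set.range (leftQ L) := ⟨leftQ L [a], ⟨[a], rfl⟩⟩

end Stmt6Aux

open Stmt6Aux in
/-- If for some letter `a` the quotient `L_a` is uniquely
reachable (`L_x = L_a` implies `x = a`), then `σ(L) ≤ 1 + (n-2)^n`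
where `n = κ(L)`. -/
theorem stmt_6 {α : Type*} [Fintype α] (L : Set (List α))
    (hreg : (Set.range (leftQ L)).Finite) (n : ℕ) (hn : quotCompl L = n)
    (a : α) (hur : ∀ x : List α, leftQ L x = leftQ L [a] → x = [a]) :
    synCompl L ≤ 1 + (n - 2) ^ n := by
  classical
  haveI : Fintype (Set.range (leftQ L)) := hreg.fintype
  -- unique reachability of the initial state
  have hnil : ∀ z : List α, leftQ L z = leftQ L [] → z = [] := by
    intro z hz
    have h2 : leftQ L (z ++ [a]) = leftQ L [a] := by
      ext v
      have h1 := Set.ext_iff.mp hz ([a] ++ v)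
      simp only [leftQ, Set.mem_setOf_eq, List.nil_append] at h1 ⊢
      rw [List.append_assoc]
      exact h1
    have h3 := hur _ h2
    have h4 := congrArg List.length h3
    simp at h4
    exact h4
  -- key property: transformations of words other than [a] avoid eSt and aSt
  have hA' : ∀ z : List α, z ≠ [] → z ≠ [a] → ∀ q : Set.range (leftQ L),
      step L z q ≠ eSt L ∧ step L z q ≠ aSt L a := by
    intro z hz hza q
    obtain ⟨w, hw⟩ := q.2
    constructor
    · intro h
      have hval : leftQ L (w ++ z) = leftQ L [] := by
        rw [leftQ_append, hw]
        exact congrArg Subtype.val h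
      have := hnil _ hval
      exact hz (List.append_eq_nil_iff.mp this).2
    · intro h
      have hval : leftQ L (w ++ z) = leftQ L [a] := by
        rw [leftQ_append, hw]
        exact congrArg Subtype.val h
      have h2 := hur _ hval
      cases w with
      | nil => exact hza (by simpa using h2)
      | cons b t =>
        simp only [List.cons_append, List.cons.injEq] at h2
        exact hz (List.append_eq_nil_iff.mp h2.2).2
  -- distinctness of the two states
  have heA : eSt L ≠ aSt L a := by
    intro h
    have := hur [] (congrArg Subtype.val h)
    simp at this
  -- the class of the word [a]
  set a' : {w : List α // w ≠ []} := ⟨[a], by simp⟩ with ha'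
  -- property of G away from the class of [a]
  have hprop : ∀ c : Quotient (synSetoid L), G L c ≠ G L (Quotient.mk _ a') →
      ∀ q, G L c q ≠ eSt L ∧ G L c q ≠ aSt L a := by
    intro c
    induction c using Quotient.ind with
    | _ x =>
      intro h q
      have hxa : x.1 ≠ [a] := by
        intro hx
        apply h
        show step L x.1 = step L [a]
        rw [hx]
      exact hA' x.1 x.2 hxa q
  -- the injection into Option (Q → S)
  have hcard : Nat.card (Quotient (synSetoid L)) ≤
      Nat.card (Option (Set.range (leftQ L) →
        {q : Set.range (leftQ L) // q ≠ eSt L ∧ q ≠ aSt L a})) := by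
    apply Nat.card_le_card_of_injective
      (fun c => if h : G L c = G L (Quotient.mk _ a') then none
        else some (fun q => ⟨G L c q, hprop c h q⟩))
    intro c c' hcc
    dsimp only at hcc
    by_cases h1 : G L c = G L (Quotient.mk _ a') <;>
      by_cases h2 : G L c' = G L (Quotient.mk _ a')
    · exact G_inj L (h1.trans h2.symm)
    · simp only [dif_pos h1, dif_neg h2] at hcc
      exact absurd hcc (by simp)
    · simp only [dif_neg h1, dif_pos h2] at hcc
      exact absurd hcc (by simp)
    · rw [dif_neg h1, dif_neg h2] at hcc
      have h3 := Option.some.inj hcc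
      apply G_inj L
      funext q
      exact congrArg Subtype.val (congrFun h3 q)
  -- cardinality of Q
  have hQn : Fintype.card (Set.range (leftQ L)) = n := by
    rw [← hn]
    unfold quotCompl
    rw [Nat.card_eq_fintype_card]
  -- cardinality of S
  have hSn : Fintype.card {q : Set.range (leftQ L) // q ≠ eSt L ∧ q ≠ aSt L a} ≤ n - 2 := by
    rw [Fintype.card_subtype]
    calc (Finset.univ.filter fun q => q ≠ eSt L ∧ q ≠ aSt L a).card
        ≤ (Finset.univ \ {eSt L, aSt L a}).card := by
          apply Finset.card_le_card
          intro q hq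
          simp only [Finset.mem_filter] at hq
          simp [hq.2.1, hq.2.2]
      _ = n - 2 := by
          rw [Finset.card_sdiff_of_subset (by simp), Finset.card_univ, hQn]
          congr 1
          rw [Finset.card_insert_of_notMem (by simp [heA]), Finset.card_singleton]
  calc synCompl L = Nat.card (Quotient (synSetoid L)) := rfl
    _ ≤ Nat.card (Option (Set.range (leftQ L) →
        {q : Set.range (leftQ L) // q ≠ eSt L ∧ q ≠ aSt L a})) := hcard
    _ = Fintype.card (Set.range (leftQ L) →
        {q : Set.range (leftQ L) // q ≠ eSt L ∧ q ≠ aSt L a}) + 1 := by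
          rw [Nat.card_eq_fintype_card, Fintype.card_option]
    _ = Fintype.card {q : Set.range (leftQ L) // q ≠ eSt L ∧ q ≠ aSt L a} ^ n + 1 := by
          rw [Fintype.card_fun, hQn]
    _ ≤ (n - 2) ^ n + 1 := by
          exact Nat.add_le_add_right (Nat.pow_le_pow_left hSn n) 1
    _ = 1 + (n - 2) ^ n := Nat.add_comm _ 1
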